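/- For every λ ≥ 0 and every θ ∈ ℝ, with g₃²(θ) = (1/4)e^{iθ} + 5/6 − (3/2)e^{−iθ} + (1/2)e^{−2iθ} − (1/12)e^{−3iθ}, one has 1 + (λ/2)g₃²(θ) ≠ 0 and |(1 − (λ/2)g₃²(θ))/(1 + (λ/2)g₃²(θ))| ≤ 1. That is, the Crank–Nicolson time discretisation combined with the spatial operator δ₃² is unconditionally von Neumann stable. -/

import Mathlib

/-!
The real part of `g₃²(θ)` is `(1 - cos θ)³ / 3 ≥ 0`, so `z = (λ/2) g₃²(θ)` lies in the closed
right half-plane, and there `1 + z ≠ 0` and `|1 - z| ≤ |1 + z|`, i.e. the Cayley transform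
`(1 - z)/(1 + z)` maps into the closed unit disc.
-/

open Complex

namespace Complex

lemma norm_one_sub_le_norm_one_add {z : ℂ} (hz : 0 ≤ z.re) : ‖1 - z‖ ≤ ‖1 + z‖ := by
  have hsq : normSq (1 - z) ≤ normSq (1 + z) := by
    simp only [normSq_apply, sub_re, sub_im, add_re, add_im, one_re, one_im]
    nlinarith
  simpa only [norm_def] using Real.sqrt_le_sqrt hsq

lemma one_add_ne_zero_of_re_nonneg {z : ℂ} (hz : 0 ≤ z.re) : 1 + z ≠ 0 := by
  intro h
  have := congrArg re h
  simp only [add_re, one_re, zero_re] at this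
  linarith

lemma norm_one_sub_div_one_add_le_one_of_re_nonneg {z : ℂ} (hz : 0 ≤ z.re) :
    ‖(1 - z) / (1 + z)‖ ≤ 1 := by
  rw [norm_div, div_le_one (norm_pos_iff.mpr (one_add_ne_zero_of_re_nonneg hz))]
  exact norm_one_sub_le_norm_one_add hz

lemma re_exp_mul_ofReal_mul_I (c θ : ℝ) : (exp (c * (θ : ℂ) * I)).re = Real.cos (c * θ) := by
  rw [← ofReal_mul, exp_ofReal_mul_I_re]

end Complex

noncomputable def deltaThreeSqSymbol (θ : ℝ) : ℂ :=
  (1 / 4 : ℂ) * exp ((θ : ℂ) * I) + 5 / 6 - (3 / 2 : ℂ) * exp (-(θ : ℂ) * I) +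
    (1 / 2 : ℂ) * exp (-2 * (θ : ℂ) * I) - (1 / 12 : ℂ) * exp (-3 * (θ : ℂ) * I)

lemma deltaThreeSqSymbol_re (θ : ℝ) :
    (deltaThreeSqSymbol θ).re = (1 - Real.cos θ) ^ 3 / 3 := by
  have h1 : (exp (-(θ : ℂ) * I)).re = Real.cos θ := by
    simpa using re_exp_mul_ofReal_mul_I (-1) θ
  have h2 : (exp (-2 * (θ : ℂ) * I)).re = 2 * Real.cos θ ^ 2 - 1 := by
    simpa [Real.cos_two_mul] using re_exp_mul_ofReal_mul_I (-2) θ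
  have h3 : (exp (-3 * (θ : ℂ) * I)).re = 4 * Real.cos θ ^ 3 - 3 * Real.cos θ := by
    simpa [Real.cos_three_mul] using re_exp_mul_ofReal_mul_I (-3) θ
  simp only [deltaThreeSqSymbol, sub_re, add_re, mul_re, exp_ofReal_mul_I_re, h1, h2, h3]
  simp only [div_ofNat_re, div_ofNat_im, one_re, one_im, re_ofNat, im_ofNat]
  ring

lemma deltaThreeSqSymbol_re_nonneg (θ : ℝ) : 0 ≤ (deltaThreeSqSymbol θ).re := by
  rw [deltaThreeSqSymbol_re]
  have : 0 ≤ 1 - Real.cos θ := sub_nonneg.mpr (Real.cos_le_one θ)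
  positivity

/-- Unconditional von Neumann stability of Crank–Nicolson with the spatial
operator `δ₃²`: for every `λ ≥ 0` and `θ`, with
`g₃²(θ) = (1/4)e^{iθ} + 5/6 - (3/2)e^{-iθ} + (1/2)e^{-2iθ} - (1/12)e^{-3iθ}`,
one has `1 + (λ/2) g₃²(θ) ≠ 0` and `|(1 - (λ/2) g₃²(θ))/(1 + (λ/2) g₃²(θ))| ≤ 1`. -/
theorem stmt_17 (lam : ℝ) (hlam : 0 ≤ lam) (θ : ℝ) :
    1 + ((lam : ℂ) / 2) * ((1 / 4 : ℂ) * Complex.exp ((θ : ℂ) * Complex.I) + 5 / 6 -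
        (3 / 2 : ℂ) * Complex.exp (-(θ : ℂ) * Complex.I) +
        (1 / 2 : ℂ) * Complex.exp (-2 * (θ : ℂ) * Complex.I) -
        (1 / 12 : ℂ) * Complex.exp (-3 * (θ : ℂ) * Complex.I)) ≠ 0 ∧
      ‖
        ((1 - ((lam : ℂ) / 2) * ((1 / 4 : ℂ) * Complex.exp ((θ : ℂ) * Complex.I) + 5 / 6 -
            (3 / 2 : ℂ) * Complex.exp (-(θ : ℂ) * Complex.I) +
            (1 / 2 : ℂ) * Complex.exp (-2 * (θ : ℂ) * Complex.I) -
            (1 / 12 : ℂ) * Complex.exp (-3 * (θ : ℂ) * Complex.I))) /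
          (1 + ((lam : ℂ) / 2) * ((1 / 4 : ℂ) * Complex.exp ((θ : ℂ) * Complex.I) + 5 / 6 -
            (3 / 2 : ℂ) * Complex.exp (-(θ : ℂ) * Complex.I) +
            (1 / 2 : ℂ) * Complex.exp (-2 * (θ : ℂ) * Complex.I) -
            (1 / 12 : ℂ) * Complex.exp (-3 * (θ : ℂ) * Complex.I))))‖ ≤ 1 := by
  have hz : 0 ≤ ((lam : ℂ) / 2 * deltaThreeSqSymbol θ).re := by
    rw [← ofReal_ofNat, ← ofReal_div, re_ofReal_mul]
    exact mul_nonneg (by linarith) (deltaThreeSqSymbol_re_nonneg θ)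
  exact ⟨one_add_ne_zero_of_re_nonneg hz, norm_one_sub_div_one_add_le_one_of_re_nonneg hz⟩
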